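/- Suppose in each period t ∈ {0,1}, treatment is a deterministic function of history-invariant present information, Dt = ft(Ut), and the pairs (U0, Y0(0), Y0(1)) and (U1, Y1(0), Y1(1)) are independent. Then the full parallel trends condition holds if and only if strict exogeneity of untreated outcomes holds: E[Yt(0) | D0 = d0, D1 = d1] = μt for constants μ0, μ1 and all (d0, d1) occurring with positive probability. -/

import Mathlib

/-!
Since `D₀` is a function of `U₀` and `(U₀, Y₀(0))` is independent of `U₁`, hence of `D₁`,
conditioning on `D₁` as well as on `D₀` leaves the mean of `Y₀(0)` unchanged:
`E[Y₀(0) | D₀ = d₀, D₁ = d₁] = a(d₀)`, and symmetrically `E[Y₁(0) | D₀ = d₀, D₁ = d₁] = b(d₁)`.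
By the same independence `{D₀ = d₀, D₁ = d₁}` has positive probability iff both marginal events
do, so the admissible pairs form a rectangle. On a rectangle `b(d₁) - a(d₀)` is constant iff
`a` and `b` are each constant.
-/

open MeasureTheory ProbabilityTheory

/-- Conditional expectation of a real random variable `Y` given the event `A`. -/
noncomputable def cexp {Ω : Type*} {mΩ : MeasurableSpace Ω} (μ : Measure Ω) (A : Set Ω)
    (Y : Ω → ℝ) : ℝ := ∫ ω, Y ω ∂(@ProbabilityTheory.cond Ω mΩ μ A)

/-- `hr` says that `r` is a rectangle `{(i, j) | i ∈ A ∧ j ∈ B}`. -/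
theorem exists_forall_sub_eq_iff {ι κ G : Type*} [AddCommGroup G] {r : ι → κ → Prop}
    (hr : ∀ ⦃i i' j j'⦄, r i j → r i' j' → r i j') {x y : ι → κ → G}
    (hx : ∀ ⦃i j j'⦄, r i j → r i j' → x i j = x i j')
    (hy : ∀ ⦃i i' j⦄, r i j → r i' j → y i j = y i' j) :
    (∃ τ, ∀ i j, r i j → y i j - x i j = τ) ↔
      ∃ c₀ c₁, ∀ i j, r i j → x i j = c₀ ∧ y i j = c₁ := by
  constructor
  · rintro ⟨τ, hτ⟩
    by_cases hne : ∃ i₀ j₀, r i₀ j₀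
    · obtain ⟨i₀, j₀, h₀⟩ := hne
      refine ⟨x i₀ j₀, y i₀ j₀, fun i j hij => ⟨?_, ?_⟩⟩
      · calc x i j = x i j₀ := hx hij (hr hij h₀)
          _ = x i₀ j₀ := by
            have h₁ := hτ i j₀ (hr hij h₀)
            rw [hy (hr hij h₀) h₀] at h₁
            exact sub_right_injective (h₁.trans (hτ i₀ j₀ h₀).symm)
      · calc y i j = y i₀ j := hy hij (hr h₀ hij)
          _ = y i₀ j₀ := by
            have h₁ := hτ i₀ j (hr h₀ hij)
            rw [hx (hr h₀ hij) h₀] at h₁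
            exact sub_left_injective (h₁.trans (hτ i₀ j₀ h₀).symm)
    · simp only [not_exists] at hne
      exact ⟨0, 0, fun i j hij => (hne i j hij).elim⟩
  · rintro ⟨c₀, c₁, hc⟩
    exact ⟨c₁ - c₀, fun i j hij => by rw [(hc i j hij).1, (hc i j hij).2]⟩

section

variable {Ω : Type*} {mΩ : MeasurableSpace Ω} {μ : Measure Ω}

lemma cexp_eq_inv_mul_setIntegral (S : Set Ω) (Y : Ω → ℝ) :
    cexp μ S Y = (μ.real S)⁻¹ * ∫ ω in S, Y ω ∂μ := by
  rw [cexp, ProbabilityTheory.cond, integral_smul_measure, smul_eq_mul, ENNReal.toReal_inv,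
    measureReal_def]

lemma cexp_sub {Y Z : Ω → ℝ} (hY : Integrable Y μ) (hZ : Integrable Z μ) (S : Set Ω) :
    cexp μ S (fun ω => Y ω - Z ω) = cexp μ S Y - cexp μ S Z := by
  by_cases hS : μ S = 0
  · simp [cexp, cond_eq_zero_of_meas_eq_zero hS]
  have hfin : (μ S)⁻¹ ≠ ⊤ := ENNReal.inv_ne_top.2 hS
  exact integral_sub (hY.restrict.smul_measure hfin) (hZ.restrict.smul_measure hfin)

variable {α β : Type*} [MeasurableSpace α] [MeasurableSpace β] {U : Ω → α} {V : Ω → β}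
  {X : Ω → ℝ} {s : Set α} {t : Set β}

lemma setIntegral_inter_preimage_of_indepFun (hU : Measurable U) (hV : Measurable V)
    (hX : AEMeasurable X μ) (hind : IndepFun (fun ω => (U ω, X ω)) V μ)
    (hs : MeasurableSet s) (ht : MeasurableSet t) :
    ∫ ω in U ⁻¹' s ∩ V ⁻¹' t, X ω ∂μ = μ.real (V ⁻¹' t) * ∫ ω in U ⁻¹' s, X ω ∂μ := by
  set g : α × ℝ → ℝ := (s ×ˢ Set.univ).indicator Prod.snd
  have hg : Measurable g := measurable_snd.indicator (hs.prod .univ)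
  have hgUX : ∀ ω, g (U ω, X ω) = (U ⁻¹' s).indicator X ω := fun ω => by
    by_cases h : U ω ∈ s <;> simp [g, h]
  calc ∫ ω in U ⁻¹' s ∩ V ⁻¹' t, X ω ∂μ
      = ∫ ω in V ⁻¹' t, g (U ω, X ω) ∂μ := by
        rw [Set.inter_comm, ← setIntegral_indicator (hU hs)]
        simp only [hgUX]
    _ = μ.real (V ⁻¹' t) * ∫ ω, g (U ω, X ω) ∂μ :=
        ((IndepFun_iff_Indep _ _ _).1 hind.symm).setIntegral_eq_mul hV.comap_le
          (hU.aemeasurable.prodMk hX) ⟨t, ht, rfl⟩ hg.aestronglyMeasurable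
    _ = μ.real (V ⁻¹' t) * ∫ ω in U ⁻¹' s, X ω ∂μ := by
        simp only [hgUX, integral_indicator (hU hs)]

lemma cexp_inter_preimage_of_indepFun [IsFiniteMeasure μ] (hU : Measurable U)
    (hV : Measurable V) (hX : AEMeasurable X μ) (hind : IndepFun (fun ω => (U ω, X ω)) V μ)
    (hs : MeasurableSet s) (ht : MeasurableSet t) (hVt : μ (V ⁻¹' t) ≠ 0) :
    cexp μ (U ⁻¹' s ∩ V ⁻¹' t) X = cexp μ (U ⁻¹' s) X := by
  have hVt' : μ.real (V ⁻¹' t) ≠ 0 := (measureReal_ne_zero_iff).2 hVt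
  have hUV : IndepFun U V μ := hind.comp measurable_fst measurable_id
  have hmul : μ.real (U ⁻¹' s ∩ V ⁻¹' t) = μ.real (U ⁻¹' s) * μ.real (V ⁻¹' t) := by
    simp only [measureReal_def, hUV.measure_inter_preimage_eq_mul _ _ hs ht, ENNReal.toReal_mul]
  rw [cexp_eq_inv_mul_setIntegral, cexp_eq_inv_mul_setIntegral,
    setIntegral_inter_preimage_of_indepFun hU hV hX hind hs ht, hmul, mul_inv, mul_assoc,
    inv_mul_cancel_left₀ hVt']

lemma ProbabilityTheory.IndepFun.measure_inter_preimage_pos_iff (h : IndepFun U V μ)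
    (hs : MeasurableSet s) (ht : MeasurableSet t) :
    0 < μ (U ⁻¹' s ∩ V ⁻¹' t) ↔ μ (U ⁻¹' s) ≠ 0 ∧ μ (V ⁻¹' t) ≠ 0 := by
  rw [h.measure_inter_preimage_eq_mul _ _ hs ht, pos_iff_ne_zero, mul_ne_zero_iff]

end

theorem parallelTrends_iff_strictExogeneity_of_indepFun {Ω ι κ : Type*} {mΩ : MeasurableSpace Ω}
    [MeasurableSpace ι] [MeasurableSingletonClass ι] [MeasurableSpace κ]
    [MeasurableSingletonClass κ] {μ : Measure Ω} [IsFiniteMeasure μ] {D0 : Ω → ι} {D1 : Ω → κ}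
    {Y0 Y1 : Ω → ℝ} (hD0 : Measurable D0) (hD1 : Measurable D1) (hY0 : Integrable Y0 μ)
    (hY1 : Integrable Y1 μ) (hind0 : IndepFun (fun ω => (D0 ω, Y0 ω)) D1 μ)
    (hind1 : IndepFun (fun ω => (D1 ω, Y1 ω)) D0 μ) (P0 : ι → Prop) (P1 : κ → Prop) :
    (∃ τ : ℝ, ∀ d0 d1, P0 d0 → P1 d1 → 0 < μ {ω | D0 ω = d0 ∧ D1 ω = d1} →
        cexp μ {ω | D0 ω = d0 ∧ D1 ω = d1} (fun ω => Y1 ω - Y0 ω) = τ) ↔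
      ∃ μ0 μ1 : ℝ, ∀ d0 d1, P0 d0 → P1 d1 → 0 < μ {ω | D0 ω = d0 ∧ D1 ω = d1} →
        cexp μ {ω | D0 ω = d0 ∧ D1 ω = d1} Y0 = μ0 ∧
        cexp μ {ω | D0 ω = d0 ∧ D1 ω = d1} Y1 = μ1 := by
  have hevent : ∀ d0 d1, {ω | D0 ω = d0 ∧ D1 ω = d1} = D0 ⁻¹' {d0} ∩ D1 ⁻¹' {d1} :=
    fun _ _ => rfl
  have hD : IndepFun D0 D1 μ := hind0.comp measurable_fst measurable_id
  have hpos : ∀ d0 d1, 0 < μ {ω | D0 ω = d0 ∧ D1 ω = d1} ↔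
      μ (D0 ⁻¹' {d0}) ≠ 0 ∧ μ (D1 ⁻¹' {d1}) ≠ 0 := fun d0 d1 => by
    rw [hevent]
    exact hD.measure_inter_preimage_pos_iff (.singleton _) (.singleton _)
  have hcexp0 : ∀ {d0 d1}, μ (D1 ⁻¹' {d1}) ≠ 0 →
      cexp μ {ω | D0 ω = d0 ∧ D1 ω = d1} Y0 = cexp μ (D0 ⁻¹' {d0}) Y0 := fun h => by
    rw [hevent]
    exact cexp_inter_preimage_of_indepFun hD0 hD1 hY0.aemeasurable hind0 (.singleton _)
      (.singleton _) h
  have hcexp1 : ∀ {d0 d1}, μ (D0 ⁻¹' {d0}) ≠ 0 →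
      cexp μ {ω | D0 ω = d0 ∧ D1 ω = d1} Y1 = cexp μ (D1 ⁻¹' {d1}) Y1 := fun h => by
    rw [hevent, Set.inter_comm]
    exact cexp_inter_preimage_of_indepFun hD1 hD0 hY1.aemeasurable hind1 (.singleton _)
      (.singleton _) h
  simp only [cexp_sub hY1 hY0]
  simpa only [and_imp] using exists_forall_sub_eq_iff
    (r := fun d0 d1 => P0 d0 ∧ P1 d1 ∧ 0 < μ {ω | D0 ω = d0 ∧ D1 ω = d1})
    (x := fun d0 d1 => cexp μ {ω | D0 ω = d0 ∧ D1 ω = d1} Y0)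
    (y := fun d0 d1 => cexp μ {ω | D0 ω = d0 ∧ D1 ω = d1} Y1)
    (fun i i' j j' ⟨hi, _, hij⟩ ⟨_, hj', hi'j'⟩ =>
      ⟨hi, hj', (hpos i j').2 ⟨((hpos i j).1 hij).1, ((hpos i' j').1 hi'j').2⟩⟩)
    (fun i j j' ⟨_, _, hij⟩ ⟨_, _, hij'⟩ => by
      rw [hcexp0 ((hpos i j).1 hij).2, hcexp0 ((hpos i j').1 hij').2])
    (fun i i' j ⟨_, _, hij⟩ ⟨_, _, hi'j⟩ => by
      rw [hcexp1 ((hpos i j).1 hij).1, hcexp1 ((hpos i' j).1 hi'j).1])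

theorem stmt_7_general {Ω : Type*} [MeasurableSpace Ω] (μ : Measure Ω) [IsProbabilityMeasure μ]
    {α β : Type*} [MeasurableSpace α] [MeasurableSpace β]
    (U0 : Ω → α) (U1 : Ω → β) (hU0 : Measurable U0) (hU1 : Measurable U1)
    (Y00 Y01 Y10 Y11 : Ω → ℝ)
    (hY00 : Integrable Y00 μ)
    (hY10 : Integrable Y10 μ)
    (f0 : α → ℕ) (f1 : β → ℕ) (hf0 : Measurable f0) (hf1 : Measurable f1)
    (D0 D1 : Ω → ℕ)
    (hD0 : ∀ ω, D0 ω = f0 (U0 ω)) (hD1 : ∀ ω, D1 ω = f1 (U1 ω))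
    -- independence over time of information and potential outcomes
    (hindep : IndepFun (fun ω => (U0 ω, Y00 ω, Y01 ω)) (fun ω => (U1 ω, Y10 ω, Y11 ω)) μ) :
    (∃ τ : ℝ, ∀ d0 d1 : ℕ, d0 ≤ 1 → d1 ≤ 1 → 0 < μ {ω | D0 ω = d0 ∧ D1 ω = d1} →
        cexp μ {ω | D0 ω = d0 ∧ D1 ω = d1} (fun ω => Y10 ω - Y00 ω) = τ)
    ↔
    (∃ μ0 μ1 : ℝ, ∀ d0 d1 : ℕ, d0 ≤ 1 → d1 ≤ 1 → 0 < μ {ω | D0 ω = d0 ∧ D1 ω = d1} →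
        cexp μ {ω | D0 ω = d0 ∧ D1 ω = d1} Y00 = μ0 ∧
        cexp μ {ω | D0 ω = d0 ∧ D1 ω = d1} Y10 = μ1) := by
  have hD0' : D0 = f0 ∘ U0 := funext hD0
  have hD1' : D1 = f1 ∘ U1 := funext hD1
  have hD0m : Measurable D0 := hD0' ▸ hf0.comp hU0
  have hD1m : Measurable D1 := hD1' ▸ hf1.comp hU1
  have hind0 : IndepFun (fun ω => (D0 ω, Y00 ω)) D1 μ := by
    rw [hD0', hD1']
    exact hindep.comp (φ := fun p : α × ℝ × ℝ => (f0 p.1, p.2.1))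
      ((hf0.comp measurable_fst).prodMk measurable_snd.fst) (hf1.comp measurable_fst)
  have hind1 : IndepFun (fun ω => (D1 ω, Y10 ω)) D0 μ := by
    rw [hD0', hD1']
    exact hindep.symm.comp (φ := fun p : β × ℝ × ℝ => (f1 p.1, p.2.1))
      ((hf1.comp measurable_fst).prodMk measurable_snd.fst) (hf0.comp measurable_fst)
  exact parallelTrends_iff_strictExogeneity_of_indepFun hD0m hD1m hY00 hY10 hind0 hind1
    (· ≤ 1) (· ≤ 1)

/-- Selection on present outcomes with serially independent information: if `Dt = ft(Ut)`
and `(U0, Y0(·)) ⟂ (U1, Y1(·))`, then full parallel trends holds iff strict exogeneity of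
untreated outcomes holds. -/
theorem stmt_7 {Ω : Type*} [MeasurableSpace Ω] (μ : Measure Ω) [IsProbabilityMeasure μ]
    {α β : Type*} [MeasurableSpace α] [MeasurableSpace β]
    (U0 : Ω → α) (U1 : Ω → β) (hU0 : Measurable U0) (hU1 : Measurable U1)
    (Y00 Y01 Y10 Y11 : Ω → ℝ)
    (hY00 : Integrable Y00 μ) (hY01 : Integrable Y01 μ)
    (hY10 : Integrable Y10 μ) (hY11 : Integrable Y11 μ)
    (f0 : α → ℕ) (f1 : β → ℕ) (hf0 : Measurable f0) (hf1 : Measurable f1)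
    (D0 D1 : Ω → ℕ)
    (hD0 : ∀ ω, D0 ω = f0 (U0 ω)) (hD1 : ∀ ω, D1 ω = f1 (U1 ω))
    (hD0rng : ∀ ω, D0 ω ≤ 1) (hD1rng : ∀ ω, D1 ω ≤ 1)
    -- independence over time of information and potential outcomes
    (hindep : IndepFun (fun ω => (U0 ω, Y00 ω, Y01 ω)) (fun ω => (U1 ω, Y10 ω, Y11 ω)) μ) :
    (∃ τ : ℝ, ∀ d0 d1 : ℕ, d0 ≤ 1 → d1 ≤ 1 → 0 < μ {ω | D0 ω = d0 ∧ D1 ω = d1} →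
        cexp μ {ω | D0 ω = d0 ∧ D1 ω = d1} (fun ω => Y10 ω - Y00 ω) = τ)
    ↔
    (∃ μ0 μ1 : ℝ, ∀ d0 d1 : ℕ, d0 ≤ 1 → d1 ≤ 1 → 0 < μ {ω | D0 ω = d0 ∧ D1 ω = d1} →
        cexp μ {ω | D0 ω = d0 ∧ D1 ω = d1} Y00 = μ0 ∧
        cexp μ {ω | D0 ω = d0 ∧ D1 ω = d1} Y10 = μ1) :=
  stmt_7_general μ U0 U1 hU0 hU1 Y00 Y01 Y10 Y11 hY00 hY10 f0 f1 hf0 hf1 D0 D1 hD0 hD1 hindep
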